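/- Let V be a finite-dimensional real vector space, ω a skew-symmetric bilinear form on V, W a linear subspace of End(V), and fix v̄₁, v̄₂ ∈ V with ω(v̄₁,v̄₂) ≠ 0. For a linear map φ : V → W the following are equivalent: (i) for all v₁,v₂ ∈ V, φ(v₁)v₂ − φ(v₂)v₁ = (ω(v₁,v₂)/ω(v̄₁,v̄₂))·(φ(v̄₁)v̄₂ − φ(v̄₂)v̄₁) (that is, φ lies in the kernel of the modified Spencer operator defined by the pair (v̄₁,v̄₂)); (ii) there exists v ∈ V such that φ(v₁)v₂ − φ(v₂)v₁ = ω(v₁,v₂)·v for all v₁,v₂ ∈ V; (iii) ω(u₁,u₂)·(φ(v₁)v₂ − φ(v₂)v₁) = ω(v₁,v₂)·(φ(u₁)u₂ − φ(u₂)u₁) for all v₁,v₂,u₁,u₂ ∈ V. In particular, the kernel of the modified Spencer operator does not depend on the choice of the pair (v̄₁,v̄₂) with ω(v̄₁,v̄₂) ≠ 0. -/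

import Mathlib

section ProportionalToForm

variable {α K M : Type*} [Field K] [AddCommGroup M] [Module K M]
  {ω : α → α → K} (s : α → α → M) {a b : α}

theorem forall_eq_div_smul_iff_exists_forall_eq_smul (hab : ω a b ≠ 0) :
    (∀ x y, s x y = (ω x y / ω a b) • s a b) ↔ ∃ v, ∀ x y, s x y = ω x y • v := by
  constructor
  · intro h
    exact ⟨(ω a b)⁻¹ • s a b, fun x y => by rw [h x y, smul_smul, div_eq_mul_inv]⟩
  · rintro ⟨v, hv⟩ x y
    rw [hv x y, hv a b, smul_smul, div_mul_cancel₀ _ hab]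

theorem exists_forall_eq_smul_iff_forall_smul_eq_smul (hab : ω a b ≠ 0) :
    (∃ v, ∀ x y, s x y = ω x y • v) ↔ ∀ x y u w, ω u w • s x y = ω x y • s u w := by
  constructor
  · rintro ⟨v, hv⟩ x y u w
    rw [hv x y, hv u w, smul_smul, smul_smul, mul_comm]
  · intro h
    refine (forall_eq_div_smul_iff_exists_forall_eq_smul s hab).1 fun x y => ?_
    rw [div_eq_inv_mul, ← smul_smul, ← h x y a b, smul_smul, inv_mul_cancel₀ hab, one_smul]

end ProportionalToForm

theorem stmt_0 (V : Type*) [AddCommGroup V] [Module ℝ V]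
    (ω : V →ₗ[ℝ] V →ₗ[ℝ] ℝ)
    (vb₁ vb₂ : V) (hvb : ω vb₁ vb₂ ≠ 0)
    (φ : V →ₗ[ℝ] (V →ₗ[ℝ] V)) :
    ((∀ v₁ v₂ : V, φ v₁ v₂ - φ v₂ v₁
        = (ω v₁ v₂ / ω vb₁ vb₂) • (φ vb₁ vb₂ - φ vb₂ vb₁)) ↔
      (∃ v : V, ∀ v₁ v₂ : V, φ v₁ v₂ - φ v₂ v₁ = ω v₁ v₂ • v)) ∧
    ((∃ v : V, ∀ v₁ v₂ : V, φ v₁ v₂ - φ v₂ v₁ = ω v₁ v₂ • v) ↔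
      (∀ v₁ v₂ u₁ u₂ : V,
        ω u₁ u₂ • (φ v₁ v₂ - φ v₂ v₁) = ω v₁ v₂ • (φ u₁ u₂ - φ u₂ u₁))) :=
  ⟨forall_eq_div_smul_iff_exists_forall_eq_smul (fun v₁ v₂ => φ v₁ v₂ - φ v₂ v₁) hvb,
    exists_forall_eq_smul_iff_forall_smul_eq_smul (fun v₁ v₂ => φ v₁ v₂ - φ v₂ v₁) hvb⟩
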